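/- Let J : ℝ³ → ℂ³ be measurable, bounded, and transverse, i.e. p·J(p) = 0 for almost every p. Suppose there exists a constant C such that for every transverse rapidly decreasing function h : ℝ³ → ℂ³ (i.e. p·h(p) = 0 for a.e. p and for every k ≥ 0 there is C_k with |h(p)| ≤ C_k (1+|p|²)^{-k}) one has |∫_{ℝ³} ⟨J(p), h(p)⟩ dp/(2|p|)| ≤ C (∫_{ℝ³} |h(p)|² dp/(2|p|))^{1/2}. Then ∫_{ℝ³} |J(p)|² dp/(2|p|) < ∞, i.e. J lies in L²(ℝ³, dp/(2|p|)). -/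

import Mathlib

open MeasureTheory Complex

noncomputable section

abbrev E3 := EuclideanSpace ℝ (Fin 3)
abbrev C3 := EuclideanSpace ℂ (Fin 3)

/-- if `J : ℝ³ → ℂ³` is measurable, bounded and transverse, and the linear
functional `h ↦ ∫ ⟨J(p), h(p)⟩ dp/(2|p|)` is bounded (by `C · ‖h‖`) on the space of
transverse rapidly decreasing functions, then `∫ |J(p)|² dp/(2|p|) < ∞`. -/
theorem bounded_functional_implies_L2
    (J : E3 → C3) (hmeas : StronglyMeasurable J) (hbdd : ∃ M : ℝ, ∀ p, ‖J p‖ ≤ M)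
    (htrans : ∀ᵐ p : E3, (∑ i, (p i : ℂ) * J p i) = 0)
    (C : ℝ)
    (hC : ∀ h : E3 → C3, StronglyMeasurable h →
      (∀ᵐ p : E3, (∑ i, (p i : ℂ) * h p i) = 0) →
      (∀ k : ℕ, ∃ Ck : ℝ, ∀ p, ‖h p‖ ≤ Ck * (1 + ‖p‖^2) ^ (-(k : ℤ))) →
      ‖(∫ p : E3, (inner ℂ (J p) (h p) : ℂ) / ((2 * ‖p‖ : ℝ) : ℂ))‖
        ≤ C * Real.sqrt (∫ p : E3, ‖h p‖^2 / (2 * ‖p‖))) :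
    ∫⁻ p : E3, ENNReal.ofReal (‖J p‖^2 / (2 * ‖p‖)) < ⊤ := by
  classical
  obtain ⟨M, hM⟩ := hbdd
  have hM0 : 0 ≤ M := le_trans (norm_nonneg _) (hM 0)
  set f : E3 → ℝ := fun p => ‖J p‖^2 / (2 * ‖p‖) with hf
  have hfnn : ∀ p, 0 ≤ f p := fun p => by positivity
  have hfmeas : Measurable f :=
    ((hmeas.norm.measurable.pow measurable_const).div
      ((measurable_const.mul measurable_norm)))
  -- annuli
  set A : ℕ → Set E3 := fun n =>
    Metric.closedBall 0 (n : ℝ) \ Metric.ball 0 (1 / ((n : ℝ) + 1)) with hA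
  have hAmeas : ∀ n, MeasurableSet (A n) := fun n =>
    measurableSet_closedBall.diff measurableSet_ball
  have hAsub : ∀ {n m : ℕ}, n ≤ m → A n ⊆ A m := by
    intro n m hnm
    apply Set.diff_subset_diff
    · exact Metric.closedBall_subset_closedBall (by exact_mod_cast hnm)
    · apply Metric.ball_subset_ball
      have h1 : (0:ℝ) < (n:ℝ) + 1 := by positivity
      apply div_le_div_of_nonneg_left (by norm_num) h1
      have : (n:ℝ) ≤ m := by exact_mod_cast hnm
      linarith
  have hAnorm : ∀ {n : ℕ} {p : E3}, p ∈ A n →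
      1 / ((n : ℝ) + 1) ≤ ‖p‖ ∧ ‖p‖ ≤ (n : ℝ) := by
    intro n p hp
    obtain ⟨h1, h2⟩ := hp
    rw [Metric.mem_closedBall, dist_zero_right] at h1
    rw [Metric.mem_ball, dist_zero_right, not_lt] at h2
    exact ⟨h2, h1⟩
  -- key bound for each n
  have key : ∀ n : ℕ, ∫⁻ p, ENNReal.ofReal ((A n).indicator f p) ≤ ENNReal.ofReal (C^2) := by
    intro n
    set h : E3 → C3 := fun p => (A n).indicator J p with hh
    have hhm : StronglyMeasurable h := hmeas.indicator (hAmeas n)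
    have hht : ∀ᵐ p : E3, (∑ i, (p i : ℂ) * h p i) = 0 := by
      filter_upwards [htrans] with p hp
      by_cases hmem : p ∈ A n
      · simpa [hh, Set.indicator_of_mem hmem] using hp
      · simp [hh, Set.indicator_of_notMem hmem]
    have hhd : ∀ k : ℕ, ∃ Ck : ℝ, ∀ p, ‖h p‖ ≤ Ck * (1 + ‖p‖^2) ^ (-(k : ℤ)) := by
      intro k
      refine ⟨M * (1 + (n:ℝ)^2)^k, fun p => ?_⟩
      have hap : (0:ℝ) < (1 + ‖p‖^2)^k := by positivity
      rw [zpow_neg, zpow_natCast]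
      by_cases hmem : p ∈ A n
      · obtain ⟨_, h2⟩ := hAnorm hmem
        have hle : (1 + ‖p‖^2)^k ≤ (1 + (n:ℝ)^2)^k := by
          apply pow_le_pow_left₀ (by positivity)
          nlinarith [norm_nonneg p]
        simp only [hh, Set.indicator_of_mem hmem]
        rw [← div_eq_mul_inv, le_div_iff₀ hap]
        calc ‖J p‖ * ((1 + ‖p‖^2)^k) ≤ M * ((1 + (n:ℝ)^2)^k) :=
              mul_le_mul (hM p) hle (by positivity) hM0
          _ = M * (1 + (n:ℝ)^2)^k := rfl
      · simp only [hh, Set.indicator_of_notMem hmem, norm_zero]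
        positivity
    have hbound := hC h hhm hht hhd
    -- identify integrals
    set g : E3 → ℝ := (A n).indicator f with hg
    have hgnn : ∀ p, 0 ≤ g p := fun p => Set.indicator_nonneg (fun q _ => hfnn q) p
    have hEq1 : (fun p : E3 => ‖h p‖^2 / (2 * ‖p‖)) = g := by
      funext p
      by_cases hmem : p ∈ A n
      · simp [hh, hg, Set.indicator_of_mem hmem, hf]
      · simp [hh, hg, Set.indicator_of_notMem hmem]
    have hEq2 : (fun p : E3 => (inner ℂ (J p) (h p) : ℂ) / ((2 * ‖p‖ : ℝ) : ℂ))
        = fun p : E3 => ((g p : ℝ) : ℂ) := by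
      funext p
      by_cases hmem : p ∈ A n
      · simp only [hh, hg, hf, Set.indicator_of_mem hmem]
        rw [inner_self_eq_norm_sq_to_K]
        simp [RCLike.ofReal_alg, Complex.ofReal_div]
      · simp [hh, hg, Set.indicator_of_notMem hmem]
    -- integrability of g
    have hgint : Integrable g := by
      rw [hg, integrable_indicator_iff (hAmeas n)]
      have hfin : volume (A n) < ⊤ :=
        lt_of_le_of_lt (measure_mono Set.diff_subset) measure_closedBall_lt_top
      have hconst : IntegrableOn (fun _ : E3 => M^2 * ((n:ℝ)+1) / 2) (A n) :=
        integrableOn_const hfin.ne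
      apply Integrable.mono' hconst (hfmeas.aestronglyMeasurable.restrict)
      rw [ae_restrict_iff' (hAmeas n)]
      filter_upwards with p hp
      obtain ⟨h1, _⟩ := hAnorm hp
      have hp0 : (0:ℝ) < ‖p‖ := lt_of_lt_of_le (by positivity) h1
      rw [Real.norm_of_nonneg (hfnn p), hf]
      rw [div_le_div_iff₀ (by positivity) (by norm_num)]
      have h1' : 1 ≤ ‖p‖ * ((n:ℝ)+1) := by
        rw [div_le_iff₀ (by positivity)] at h1
        linarith
      nlinarith [hM p, norm_nonneg (J p), sq_nonneg M]
    -- from the functional bound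
    set I : ℝ := ∫ p, g p with hI
    have hInn : 0 ≤ I := integral_nonneg hgnn
    have hIb : I ≤ C * Real.sqrt I := by
      have := hbound
      rw [hEq2] at this
      rw [show (∫ p : E3, ((g p : ℝ) : ℂ)) = ((∫ p, g p : ℝ) : ℂ) from integral_ofReal] at this
      rw [show (∫ p : E3, ‖h p‖^2 / (2 * ‖p‖)) = I from by
        rw [hI]; exact integral_congr_ae (Filter.Eventually.of_forall fun p => congrFun hEq1 p)] at this
      rwa [Complex.norm_real, Real.norm_of_nonneg hInn] at this
    have hIC : I ≤ C^2 := by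
      nlinarith [Real.sq_sqrt hInn, Real.sqrt_nonneg I]
    calc ∫⁻ p, ENNReal.ofReal (g p)
        = ENNReal.ofReal I := (ofReal_integral_eq_lintegral_ofReal hgint
            (Filter.Eventually.of_forall hgnn)).symm
      _ ≤ ENNReal.ofReal (C^2) := ENNReal.ofReal_le_ofReal hIC
  -- monotone convergence
  have hmono : Monotone (fun n => fun p => ENNReal.ofReal ((A n).indicator f p)) := by
    intro n m hnm p
    exact ENNReal.ofReal_le_ofReal
      (Set.indicator_le_indicator_of_subset (hAsub hnm) hfnn p)
  have hsup : ∀ᵐ p : E3, ENNReal.ofReal (f p)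
      = ⨆ n, ENNReal.ofReal ((A n).indicator f p) := by
    have hne : ∀ᵐ p : E3, p ≠ 0 := by
      rw [ae_iff]
      have : {p : E3 | ¬ p ≠ 0} = {0} := by ext p; simp
      rw [this]
      exact measure_singleton 0
    filter_upwards [hne] with p hp
    apply le_antisymm
    · have hp0 : (0:ℝ) < ‖p‖ := norm_pos_iff.mpr hp
      set n : ℕ := max ⌈‖p‖⌉₊ ⌈1/‖p‖⌉₊ with hn
      have hmem : p ∈ A n := by
        constructor
        · rw [Metric.mem_closedBall, dist_zero_right]
          calc ‖p‖ ≤ (⌈‖p‖⌉₊ : ℝ) := Nat.le_ceil _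
            _ ≤ (n : ℝ) := by exact_mod_cast le_max_left _ _
        · rw [Metric.mem_ball, dist_zero_right, not_lt]
          rw [div_le_iff₀ (by positivity)]
          have : 1/‖p‖ ≤ (n : ℝ) := by
            calc 1/‖p‖ ≤ (⌈1/‖p‖⌉₊ : ℝ) := Nat.le_ceil _
              _ ≤ (n : ℝ) := by exact_mod_cast le_max_right _ _
          rw [div_le_iff₀ hp0] at this
          nlinarith
      calc ENNReal.ofReal (f p) = ENNReal.ofReal ((A n).indicator f p) := by
            rw [Set.indicator_of_mem hmem]
        _ ≤ ⨆ n, ENNReal.ofReal ((A n).indicator f p) :=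
            le_iSup (fun m => ENNReal.ofReal ((A m).indicator f p)) n
    · apply iSup_le
      intro n
      exact ENNReal.ofReal_le_ofReal (Set.indicator_le_self' (fun q _ => hfnn q) p)
  calc ∫⁻ p : E3, ENNReal.ofReal (f p)
      = ∫⁻ p : E3, ⨆ n, ENNReal.ofReal ((A n).indicator f p) := lintegral_congr_ae hsup
    _ = ⨆ n, ∫⁻ p : E3, ENNReal.ofReal ((A n).indicator f p) :=
        lintegral_iSup (fun n => (hfmeas.indicator (hAmeas n)).ennreal_ofReal)
          (fun n m hnm => hmono hnm)
    _ ≤ ENNReal.ofReal (C^2) := iSup_le key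
    _ < ⊤ := ENNReal.ofReal_lt_top
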